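/- Channel-reduction invariance of the DI capacity: let W be a DMC with finite alphabets X, Y, cost function φ : X → [0,∞) and constraint A ≥ 0, and let W_r : X_r → Y be the reduced channel of W. Then the deterministic identification capacity of W under input constraint A equals the deterministic identification capacity of W_r under the same input constraint A (with cost φ restricted to X_r). -/

import Mathlib

open Finset

/-- The probability `W^n(D | x^n)` that the output of the `n`-fold memoryless extension of the
channel `W`, on input `x^n`, lies in the set `D ⊆ Y^n`. -/
def channelPr {X Y : Type*} [Fintype Y] (W : X → Y → ℝ) {n : ℕ}
    (x : Fin n → X) (D : Finset (Fin n → Y)) : ℝ :=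
  ∑ y ∈ D, ∏ t, W (x t) (y t)

/-- A deterministic identification code with `M` messages and blocklength `n` for the channel `W`
under input-cost function `φ` and constraint `A`, with type I error at most `lam1` and type II
error at most `lam2`. -/
def IsDICode {X Y : Type*} [Fintype Y] [DecidableEq Y] (W : X → Y → ℝ)
    (φ : X → ℝ) (A : ℝ) {n M : ℕ}
    (u : Fin M → Fin n → X) (D : Fin M → Finset (Fin n → Y)) (lam1 lam2 : ℝ) : Prop :=
  (∀ i, (∑ t, φ (u i t)) / n ≤ A) ∧
  (∀ i, channelPr W (u i) (D i)ᶜ ≤ lam1) ∧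
  (∀ i j, i ≠ j → channelPr W (u i) (D j) ≤ lam2)

/-- A rate `R > 0` is achievable for deterministic identification over `W` under input
constraint `A` if for all `lam1, lam2 > 0` and all sufficiently large `n` there is a
`(⌈2^{nR}⌉, n, lam1, lam2)` DI code. -/
def DIAchievable {X Y : Type*} [Fintype Y] [DecidableEq Y] (W : X → Y → ℝ)
    (φ : X → ℝ) (A : ℝ) (R : ℝ) : Prop :=
  0 < R ∧ ∀ lam1 lam2 : ℝ, 0 < lam1 → 0 < lam2 → ∃ N : ℕ, ∀ n ≥ N,
    ∃ (u : Fin ⌈(2 : ℝ) ^ ((n : ℝ) * R)⌉₊ → Fin n → X)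
      (D : Fin ⌈(2 : ℝ) ^ ((n : ℝ) * R)⌉₊ → Finset (Fin n → Y)),
      IsDICode W φ A u D lam1 lam2

/-- The deterministic identification capacity: the supremum of achievable rates
(`0` if there are none, by the convention `sSup ∅ = 0` in `ℝ`). -/
noncomputable def DICapacity {X Y : Type*} [Fintype Y] [DecidableEq Y]
    (W : X → Y → ℝ) (φ : X → ℝ) (A : ℝ) : ℝ :=
  sSup {R : ℝ | DIAchievable W φ A R}

/-- Shannon entropy (base 2) of a probability mass function on a finite alphabet. -/
noncomputable def shannonEntropy {X : Type*} [Fintype X] (p : X → ℝ) : ℝ :=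
  -∑ x, p x * Real.logb 2 (p x)

/-! Replacing every input letter by one with the same row of `W` and no larger cost turns a DI code
into a DI code with the same error probabilities and still admissible costs. Sending each letter
to its minimal-cost representative in `Xr`, and the inclusion `Xr ↪ X`, are such substitutions in
the two directions, so `W` and `W_r` have the same achievable rates. -/

section Relabel

variable {X X' Y : Type*} [Fintype Y]
  {W : X → Y → ℝ} {V : X' → Y → ℝ} {φ : X → ℝ} {ψ : X' → ℝ}

theorem channelPr_comp {f : X → X'} (hf : ∀ x, V (f x) = W x) {n : ℕ} (x : Fin n → X)
    (D : Finset (Fin n → Y)) : channelPr V (f ∘ x) D = channelPr W x D := by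
  simp only [channelPr, Function.comp_apply, hf]

theorem IsDICode.map [DecidableEq Y] {f : X → X'} (hf : ∀ x, V (f x) = W x)
    (hcost : ∀ x, ψ (f x) ≤ φ x) {A : ℝ} {n M : ℕ} {u : Fin M → Fin n → X}
    {D : Fin M → Finset (Fin n → Y)} {lam1 lam2 : ℝ}
    (hu : IsDICode W φ A u D lam1 lam2) :
    IsDICode V ψ A (fun i => f ∘ u i) D lam1 lam2 := by
  obtain ⟨hA, h1, h2⟩ := hu
  refine ⟨fun i => ?_, fun i => ?_, fun i j hij => ?_⟩
  · calc (∑ t, ψ (f (u i t))) / n ≤ (∑ t, φ (u i t)) / n := by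
          gcongr with t
          exact hcost _
      _ ≤ A := hA i
  · simpa only [channelPr_comp hf] using h1 i
  · simpa only [channelPr_comp hf] using h2 i j hij

theorem DIAchievable.map [DecidableEq Y] {f : X → X'} (hf : ∀ x, V (f x) = W x)
    (hcost : ∀ x, ψ (f x) ≤ φ x) {A R : ℝ} (hR : DIAchievable W φ A R) :
    DIAchievable V ψ A R := by
  refine ⟨hR.1, fun lam1 lam2 h1 h2 => ?_⟩
  obtain ⟨N, hN⟩ := hR.2 lam1 lam2 h1 h2
  refine ⟨N, fun n hn => ?_⟩
  obtain ⟨u, D, hu⟩ := hN n hn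
  exact ⟨_, D, hu.map hf hcost⟩

theorem DICapacity_eq_of_maps [DecidableEq Y] (f : X → X') (g : X' → X)
    (hf : ∀ x, V (f x) = W x) (hg : ∀ x', W (g x') = V x')
    (hfcost : ∀ x, ψ (f x) ≤ φ x) (hgcost : ∀ x', φ (g x') ≤ ψ x') (A : ℝ) :
    DICapacity W φ A = DICapacity V ψ A := by
  unfold DICapacity
  congr 1
  ext R
  exact ⟨DIAchievable.map hf hfcost, DIAchievable.map hg hgcost⟩

end Relabel

theorem DI_capacity_reduction_general
    {X Y : Type*} [Fintype Y] [DecidableEq Y]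
    (W : X → Y → ℝ)
    (φ : X → ℝ) (A : ℝ)
    (Xr : Finset X)
    (hrep : ∀ x : X, ∃ z ∈ Xr, ∀ y, W z y = W x y)
    (hmin : ∀ x : X, ∀ z ∈ Xr, (∀ y, W z y = W x y) → φ z ≤ φ x) :
    DICapacity W φ A =
      DICapacity (fun (z : {x : X // x ∈ Xr}) (y : Y) => W z.val y)
        (fun z : {x : X // x ∈ Xr} => φ z.val) A := by
  choose rep hrep_mem hrep_row using hrep
  exact DICapacity_eq_of_maps (fun x => ⟨rep x, hrep_mem x⟩) Subtype.val
    (fun x => funext (hrep_row x)) (fun _ => rfl)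
    (fun x => hmin x _ (hrep_mem x) (hrep_row x)) (fun _ => le_rfl) A

/-- Channel-reduction invariance of the DI capacity: the deterministic identification capacity of
`W` under input constraint `A` equals that of the reduced channel `W_r` (defined on a set `Xr` of
minimal-cost representatives, one per class of identical rows) under the same constraint. -/
theorem DI_capacity_reduction
    {X Y : Type*} [Fintype X] [Fintype Y] [DecidableEq X] [DecidableEq Y]
    (W : X → Y → ℝ) (hW0 : ∀ x y, 0 ≤ W x y) (hW1 : ∀ x, ∑ y, W x y = 1)
    (φ : X → ℝ) (hφ : ∀ x, 0 ≤ φ x) (A : ℝ) (hA : 0 ≤ A)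
    (Xr : Finset X)
    (hrep : ∀ x : X, ∃ z ∈ Xr, ∀ y, W z y = W x y)
    (hdist : ∀ z ∈ Xr, ∀ z' ∈ Xr, (∀ y, W z y = W z' y) → z = z')
    (hmin : ∀ x : X, ∀ z ∈ Xr, (∀ y, W z y = W x y) → φ z ≤ φ x) :
    DICapacity W φ A =
      DICapacity (fun (z : {x : X // x ∈ Xr}) (y : Y) => W z.val y)
        (fun z : {x : X // x ∈ Xr} => φ z.val) A :=
  DI_capacity_reduction_general W φ A Xr hrep hmin
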